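/- Let ψ : ℝ⁴ → ℝ³ be the weight map of the two-layer tanh-activated network with scalar input and output, design points s₁ = 0, s₂ = 1, s₃ = 2, i.e. ψ(a,b,c,d) = (c·tanh(b) + d, c·tanh(a+b) + d, c·tanh(2a+b) + d). Then there exists ε > 0 such that for every T ∈ ℝ³ with ‖T − (0,2,1)‖ < ε, the infimum inf_{θ∈ℝ⁴} ‖T − ψ(θ)‖ is not attained by any θ ∈ ℝ⁴. In particular, there is a nonempty open (hence positive-measured) set of response vectors T for which the best two-layer tanh neural network approximation problem has no solution. -/

import Mathlib

lemma tanh_exp_form (x : ℝ) : Real.tanh x = (Real.exp (2*x) - 1)/(Real.exp (2*x) + 1) := by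
  have hu : Real.exp (2*x) = Real.exp x * Real.exp x := by
    rw [← Real.exp_add]; ring_nf
  have h1 : (0:ℝ) < Real.exp x := Real.exp_pos x
  rw [Real.tanh_eq_sinh_div_cosh, Real.sinh_eq, Real.cosh_eq, Real.exp_neg, hu]
  field_simp

lemma tanh_strict_mono {x y : ℝ} (h : x < y) : Real.tanh x < Real.tanh y := by
  rw [tanh_exp_form, tanh_exp_form]
  have hx : (0:ℝ) < Real.exp (2*x) := Real.exp_pos _
  have hy : (0:ℝ) < Real.exp (2*y) := Real.exp_pos _
  have h2 : Real.exp (2*x) < Real.exp (2*y) := Real.exp_lt_exp.2 (by linarith)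
  rw [div_lt_div_iff₀ (by linarith) (by linarith)]
  nlinarith

lemma tanh_tail {x : ℝ} (hx : 1 ≤ x) : 0 ≤ 1 - Real.tanh x ∧ 1 - Real.tanh x ≤ 1/x := by
  rw [tanh_exp_form]
  have hy : (0:ℝ) < Real.exp (2*x) := Real.exp_pos _
  have h2 : 2*x + 1 ≤ Real.exp (2*x) := Real.add_one_le_exp (2*x)
  have key : 1 - (Real.exp (2*x) - 1)/(Real.exp (2*x) + 1) = 2/(Real.exp (2*x) + 1) := by
    field_simp
    ring
  rw [key]
  refine ⟨by positivity, ?_⟩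
  rw [div_le_div_iff₀ (by linarith) (by linarith)]
  nlinarith

/-- small arithmetic fact used for the squared infimum value -/
lemma sq_lt_of_lt_mul {K A e : ℝ} (h : K < A*e) (hK : 0 < K) (hA2 : A^2 = 2)
    (he : 0 ≤ e) : K^2 < 2*e^2 := by nlinarith

/-- bound for the correction term `s` -/
lemma bound_s {u mt δ t s : ℝ} (hu : 0 < u) (ht : 1/2 ≤ t) (hδu : δ ≤ 2*u)
    (hδl : -(2*u) ≤ δ) (hm0 : 0 < mt) (hm2 : mt ≤ 2) (hs : s * t = mt * δ) :
    -(8*u) ≤ s ∧ s ≤ 8*u := by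
  have ht0 : (0:ℝ) < t := by linarith
  have h4u : mt * δ ≤ 4*u := by
    rcases le_or_gt 0 δ with h | h
    · nlinarith [mul_nonneg (by linarith : (0:ℝ) ≤ 2 - mt) h]
    · nlinarith [mul_nonpos_of_nonneg_of_nonpos hm0.le h.le]
  have h4l : -(4*u) ≤ mt * δ := by
    rcases le_or_gt 0 δ with h | h
    · nlinarith [mul_nonneg hm0.le h]
    · nlinarith [mul_nonpos_of_nonneg_of_nonpos (by linarith : (0:ℝ) ≤ 2 - mt) h.le]
  constructor
  · rcases le_or_gt 0 s with h | h
    · nlinarith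
    · nlinarith [mul_nonpos_of_nonneg_of_nonpos (by linarith : (0:ℝ) ≤ t - 1/2) h.le]
  · rcases le_or_gt s 0 with h | h
    · nlinarith
    · nlinarith [mul_nonneg (by linarith : (0:ℝ) ≤ t - 1/2) h.le]

/-- final contradiction arithmetic -/
lemma arith_final {K u s γ E e₀ : ℝ} (hK1 : 3/4 < K) (hK2 : K < 5/4)
    (hu0 : 0 < u) (hu : u ≤ 1/128)
    (hsl : -(8*u) ≤ s) (hsu : s ≤ 8*u)
    (hE2 : E^2 = 0^2 + (K/2)^2 + (-(K/2) - s)^2)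
    (h21 : 21*u < γ) (hγeq : K^2 + γ = 2*e₀^2) (hle : e₀ ≤ E) (he₀ : 0 ≤ e₀) :
    False := by
  have hsq : s^2 ≤ 64*u^2 := by nlinarith
  have hKs : K * s ≤ (5/4) * (8*u) := by
    have h1 : K * s ≤ K * (8*u) := mul_le_mul_of_nonneg_left hsu (by linarith)
    have h2 : K * (8*u) ≤ (5/4) * (8*u) := by
      apply mul_le_mul_of_nonneg_right (le_of_lt hK2) (by positivity)
    linarith
  have h128 : (128:ℝ)*u^2 ≤ u := by nlinarith
  have hEK : 2*E^2 ≤ K^2 + 21*u := by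
    have hid : 2*E^2 = K^2 + 2*(K*s) + 2*s^2 := by rw [hE2]; ring
    nlinarith
  have hee : 2*e₀^2 ≤ 2*E^2 := by nlinarith
  linarith

/-- The weight map `ψ : ℝ⁴ → ℝ³` of the two-layer tanh-activated network with scalar input
and output at the sample points `s₁ = 0`, `s₂ = 1`, `s₃ = 2`:
`ψ(a,b,c,d) = (c·tanh(b) + d, c·tanh(a+b) + d, c·tanh(2a+b) + d)`. -/
noncomputable def psi (θ : ℝ × ℝ × ℝ × ℝ) : Fin 3 → ℝ :=
  ![θ.2.2.1 * Real.tanh θ.2.1 + θ.2.2.2,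
    θ.2.2.1 * Real.tanh (θ.1 + θ.2.1) + θ.2.2.2,
    θ.2.2.1 * Real.tanh (2 * θ.1 + θ.2.1) + θ.2.2.2]

/-- The Euclidean norm on `ℝ³`. -/
noncomputable def enorm3 (v : Fin 3 → ℝ) : ℝ := Real.sqrt (∑ i, (v i) ^ 2)

lemma enorm3_sqrt (v : Fin 3 → ℝ) : enorm3 v = Real.sqrt (v 0^2 + v 1^2 + v 2^2) := by
  rw [enorm3, Fin.sum_univ_three]

lemma enorm3_nonneg (v : Fin 3 → ℝ) : 0 ≤ enorm3 v := Real.sqrt_nonneg _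

lemma enorm3_sq (v : Fin 3 → ℝ) : (enorm3 v)^2 = v 0^2 + v 1^2 + v 2^2 := by
  rw [enorm3_sqrt]; exact Real.sq_sqrt (by positivity)

lemma sqrt2_enorm3 (v : Fin 3 → ℝ) :
    Real.sqrt 2 * enorm3 v = Real.sqrt (2 * (v 0^2 + v 1^2 + v 2^2)) := by
  rw [enorm3_sqrt, ← Real.sqrt_mul (by norm_num)]

lemma diff10_le (v : Fin 3 → ℝ) : v 1 - v 0 ≤ Real.sqrt 2 * enorm3 v := by
  rw [sqrt2_enorm3]
  calc v 1 - v 0 ≤ |v 1 - v 0| := le_abs_self _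
    _ = Real.sqrt ((v 1 - v 0)^2) := (Real.sqrt_sq_eq_abs _).symm
    _ ≤ Real.sqrt (2 * (v 0^2 + v 1^2 + v 2^2)) := Real.sqrt_le_sqrt (by nlinarith [sq_nonneg (v 0 + v 1), sq_nonneg (v 2)])

lemma diff12_le (v : Fin 3 → ℝ) : v 1 - v 2 ≤ Real.sqrt 2 * enorm3 v := by
  rw [sqrt2_enorm3]
  calc v 1 - v 2 ≤ |v 1 - v 2| := le_abs_self _
    _ = Real.sqrt ((v 1 - v 2)^2) := (Real.sqrt_sq_eq_abs _).symm
    _ ≤ Real.sqrt (2 * (v 0^2 + v 1^2 + v 2^2)) := Real.sqrt_le_sqrt (by nlinarith [sq_nonneg (v 2 + v 1), sq_nonneg (v 0)])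

lemma abs_le_enorm3 (v : Fin 3 → ℝ) (i : Fin 3) : |v i| ≤ enorm3 v := by
  rw [enorm3_sqrt, ← Real.sqrt_sq_eq_abs]
  apply Real.sqrt_le_sqrt
  fin_cases i <;> simp <;> nlinarith [sq_nonneg (v 0), sq_nonneg (v 1), sq_nonneg (v 2)]

set_option maxHeartbeats 1000000 in
/-- There is an `ε > 0` such that for every response vector `T` within distance `ε` of
`(0, 2, 1)`, the best two-layer tanh neural network approximation problem
`inf_θ ‖T − ψ(θ)‖` does not attain its infimum. -/
theorem tanh_erm_ill_posed_on_open_set :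
    ∃ ε : ℝ, 0 < ε ∧ ∀ T : Fin 3 → ℝ, enorm3 (T - ![0, 2, 1]) < ε →
      ¬ ∃ θ : ℝ × ℝ × ℝ × ℝ,
        enorm3 (T - psi θ) = ⨅ θ' : ℝ × ℝ × ℝ × ℝ, enorm3 (T - psi θ') := by
  refine ⟨1/8, by norm_num, ?_⟩
  intro T hT
  rintro ⟨θ₀, hθ₀⟩
  -- coordinate bounds on T
  have hb : ∀ i : Fin 3, |((T - ![0, 2, 1] : Fin 3 → ℝ)) i| < 1/8 :=
    fun i => lt_of_le_of_lt (abs_le_enorm3 _ i) hT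
  have h0 := hb 0; have h1 := hb 1; have h2 := hb 2
  simp only [Pi.sub_apply, Matrix.cons_val_zero, Matrix.cons_val_one, Matrix.head_cons,
    Matrix.cons_val_two, Matrix.tail_cons] at h0 h1 h2
  rw [abs_lt] at h0 h1 h2
  have hT0l : -(1/8) < T 0 := by linarith [h0.1]
  have hT0u : T 0 < 1/8 := by linarith [h0.2]
  have hT1l : 15/8 < T 1 := by linarith [h1.1]
  have hT1u : T 1 < 17/8 := by linarith [h1.2]
  have hT2l : 7/8 < T 2 := by linarith [h2.1]
  have hT2u : T 2 < 9/8 := by linarith [h2.2]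
  set K : ℝ := T 1 - T 2 with hKdef
  have hK1 : 3/4 < K := by rw [hKdef]; linarith
  have hK2 : K < 5/4 := by rw [hKdef]; linarith
  -- Part A : strict lower bound for every parameter
  have partA : ∀ θ : ℝ × ℝ × ℝ × ℝ, K < Real.sqrt 2 * enorm3 (T - psi θ) := by
    intro θ
    obtain ⟨a, b, c, d⟩ := θ
    set t1 := Real.tanh b with ht1
    set t2 := Real.tanh (a + b) with ht2
    set t3 := Real.tanh (2 * a + b) with ht3
    have e0 : (T - psi (a, b, c, d)) 0 = T 0 - (c * t1 + d) := by simp [psi, ht1]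
    have e1 : (T - psi (a, b, c, d)) 1 = T 1 - (c * t2 + d) := by simp [psi, ht2]
    have e2 : (T - psi (a, b, c, d)) 2 = T 2 - (c * t3 + d) := by simp [psi, ht3]
    have hsign : c * (t2 - t1) ≤ 0 ∨ 0 < c * (t3 - t2) := by
      rcases lt_trichotomy a 0 with ha | ha | ha
      · have m1 : t2 < t1 := tanh_strict_mono (by linarith)
        have m2 : t3 < t2 := tanh_strict_mono (by linarith)
        rcases le_or_gt 0 c with hc | hc
        · exact Or.inl (mul_nonpos_of_nonneg_of_nonpos hc (by linarith))
        · exact Or.inr (mul_pos_of_neg_of_neg hc (by linarith))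
      · left
        have : t2 = t1 := by rw [ht1, ht2, ha, zero_add]
        rw [this]; simp
      · have m1 : t1 < t2 := tanh_strict_mono (by linarith)
        have m2 : t2 < t3 := tanh_strict_mono (by linarith)
        rcases le_or_gt c 0 with hc | hc
        · exact Or.inl (mul_nonpos_of_nonpos_of_nonneg hc (by linarith))
        · exact Or.inr (mul_pos hc (by linarith))
    rcases hsign with hs | hs
    · have hd := diff10_le (T - psi (a, b, c, d))
      rw [e0, e1] at hd
      have hK10 : K < T 1 - T 0 := by rw [hKdef]; linarith
      linarith
    · have hd := diff12_le (T - psi (a, b, c, d))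
      rw [e1, e2] at hd
      have : K < T 1 - T 2 + c * (t3 - t2) := by rw [hKdef]; linarith
      linarith
  -- consequences for the attained value
  set e₀ : ℝ := enorm3 (T - psi θ₀) with he₀
  have he₀nn : 0 ≤ e₀ := enorm3_nonneg _
  have hA0 : K < Real.sqrt 2 * e₀ := partA θ₀
  have hsqrt2 : (Real.sqrt 2)^2 = 2 := Real.sq_sqrt (by norm_num)
  have hKe : K^2 < 2 * e₀^2 := sq_lt_of_lt_mul hA0 (by linarith) hsqrt2 he₀nn
  set γ : ℝ := 2 * e₀^2 - K^2 with hγdef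
  have hγ : 0 < γ := by rw [hγdef]; linarith
  have hγeq : K^2 + γ = 2*e₀^2 := by rw [hγdef]; ring
  -- Part B : construct a strictly better parameter
  set n : ℝ := 128 + 21/γ with hndef
  have h21γ : 0 < 21/γ := by positivity
  have hn128 : 128 ≤ n := by rw [hndef]; linarith
  have hn0 : (0:ℝ) < n := by linarith
  have h21 : 21/n < γ := by
    rw [div_lt_iff₀ hn0]
    have h1 : 21/γ < n := by rw [hndef]; linarith
    calc (21:ℝ) = γ * (21/γ) := by field_simp
      _ < γ * n := mul_lt_mul_of_pos_left h1 hγ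
  obtain ⟨htn0, htn1⟩ := tanh_tail (x := n) (by linarith)
  obtain ⟨ht2n0, ht2n1⟩ := tanh_tail (x := 2*n) (by linarith)
  set u : ℝ := 1/n with hudef
  have hu0 : 0 < u := by rw [hudef]; positivity
  have huu : u ≤ 1/128 := by
    rw [hudef, div_le_div_iff₀ hn0 (by norm_num)]; linarith
  have h21u : 21*u < γ := by
    have : 21*u = 21/n := by rw [hudef]; ring
    rw [this]; exact h21
  have h2n : 1/(2*n) ≤ u := by
    rw [hudef, div_le_div_iff₀ (by linarith) hn0]; linarith
  have hinv : u ≤ 1/2 := by linarith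
  have htnl : 1/2 ≤ Real.tanh n := by linarith
  have htnpos : 0 < Real.tanh n := by linarith
  set M : ℝ := (T 1 + T 2)/2 with hMdef
  set c : ℝ := (M - T 0)/Real.tanh n with hcdef
  set θ' : ℝ × ℝ × ℝ × ℝ := (n, 0, c, T 0) with hθ'def
  have hMl : 0 < M - T 0 := by rw [hMdef]; linarith
  have hMu : M - T 0 ≤ 2 := by rw [hMdef]; linarith
  have hct : c * Real.tanh n = M - T 0 := by
    rw [hcdef]; exact div_mul_cancel₀ _ (ne_of_gt htnpos)
  -- the correction term
  set δ : ℝ := Real.tanh (2*n) - Real.tanh n with hδdef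
  have hδu : δ ≤ 2*u := by
    rw [hδdef]; linarith
  have hδl : -(2*u) ≤ δ := by
    rw [hδdef]; linarith
  set s : ℝ := (M - T 0) * δ / Real.tanh n with hsdef
  have hskey : s * Real.tanh n = (M - T 0) * δ := by
    rw [hsdef]; exact div_mul_cancel₀ _ (ne_of_gt htnpos)
  obtain ⟨hsl, hsu⟩ := bound_s hu0 htnl hδu hδl hMl hMu hskey
  -- values of psi θ'
  have f0 : (T - psi θ') 0 = 0 := by
    simp [psi, hθ'def, Real.tanh_zero]
  have f1 : (T - psi θ') 1 = K/2 := by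
    simp only [hθ'def, psi, Pi.sub_apply, Matrix.cons_val_one, Matrix.head_cons, Matrix.cons_val_zero]
    rw [add_zero, hct, hKdef, hMdef]
    ring
  have f2 : (T - psi θ') 2 = -(K/2) - s := by
    simp only [hθ'def, psi, Pi.sub_apply, Matrix.cons_val_two, Matrix.tail_cons,
      Matrix.head_cons]
    rw [add_zero]
    have htanh2n : Real.tanh (2*n) = Real.tanh n + δ := by rw [hδdef]; ring
    have hcδ : c * δ = s := by
      rw [hcdef, hsdef]; ring
    rw [htanh2n, mul_add, hct, hcδ, hKdef, hMdef]
    ring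
  -- final comparison
  have hsq := enorm3_sq (T - psi θ')
  rw [f0, f1, f2] at hsq
  have hlead : e₀ ≤ enorm3 (T - psi θ') := by
    rw [hθ₀]
    exact ciInf_le ⟨0, by rintro x ⟨θ'', rfl⟩; exact enorm3_nonneg _⟩ θ'
  exact arith_final hK1 hK2 hu0 huu hsl hsu hsq h21u hγeq hlead he₀nn
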